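/- arXiv:1405.1638 — 2 statements merged into one kernel-verified Lean document; each statement's English description precedes it below -/
import Mathlib

section
/- Let {P_k} be real polynomials with deg P_k = k, P_0 a non-zero constant, satisfying P_{k+1}(x) = c(−a·x + b + D)P_k(x) with a > 0, b, c ∈ ℝ, c ≠ 0. For k ≥ 1 let M_k and m_k denote the largest and smallest (real) zero of P_k. Then for each k, the Turán expression (P_{k+1}(x))² − P_{k+2}(x)·P_k(x) is non-zero at every complex x with Re x > M_{k+1} or Re x < m_{k+1}. -/
/-!
Write `q = (−aX + b + D) p`. Then `q(x) e^{bx − ax²/2}` is the derivative of `p(x) e^{bx − ax²/2}`,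
which vanishes at the real roots of `p` and tends to `0` at `±∞`. Rolle's theorem, on the bounded
gaps and on the two unbounded rays, together with the multiplicity count, shows that `q` has one
more real root than `p`, one of them beyond each extreme root of `p`. Hence every `P_k` is
real-rooted and all roots of `P_k` lie in `(m_{k+1}, M_{k+1})`.

Moreover `P_{k+1}² − P_{k+2} P_k = c² (p'² − p p'' + a p²)` with `p = P_k`, and for a split `p`,
`p'² − p p'' = p² ∑_r (x − r)⁻²` away from its roots. If `Re x` exceeds (or is below) every root,
all terms `(x − r)⁻²` lie strictly on one side of the real axis, or in `(0, ∞)` when `x` is real,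
so `∑_r (x − r)⁻² + a ≠ 0`.
-/

open Polynomial Filter Topology Set

section Rolle

variable {f f' : ℝ → ℝ} {l : ℝ}

theorem exists_hasDerivAt_eq_zero_of_dist_lt (hf : ∀ x, HasDerivAt f (f' x) x) {L z R : ℝ}
    (hLz : L < z) (hzR : z < R) (hL : dist (f L) l < dist (f z) l)
    (hR : dist (f R) l < dist (f z) l) : ∃ c ∈ Ioo L R, f' c = 0 := by
  wlog hlz : l < f z generalizing f f' l
  · have hzl : f z < l := (le_of_not_gt hlz).lt_of_ne fun h => by
      rw [h, dist_self] at hL; exact absurd hL (not_lt.2 dist_nonneg)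
    obtain ⟨c, hc, hc0⟩ := this (f := -f) (f' := -f') (l := -l) (fun x => (hf x).neg)
      (by simpa [dist_neg_neg] using hL) (by simpa [dist_neg_neg] using hR) (by simpa using hzl)
    exact ⟨c, hc, neg_eq_zero.mp hc0⟩
  have hcont : ContinuousOn f (Icc L R) := fun x _ => (hf x).continuousAt.continuousWithinAt
  obtain ⟨c, hc, hmax⟩ := isCompact_Icc.exists_isMaxOn ⟨z, hLz.le, hzR.le⟩ hcont
  have hzc : f z ≤ f c := hmax ⟨hLz.le, hzR.le⟩
  have below : ∀ y, dist (f y) l < dist (f z) l → f y < f c := fun y hy => by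
    rw [Real.dist_eq, Real.dist_eq, abs_of_pos (sub_pos.2 hlz)] at hy
    linarith [le_abs_self (f y - l)]
  have hcI : c ∈ Ioo L R :=
    ⟨hc.1.lt_of_ne fun h => (below L hL).ne (congrArg f h),
      hc.2.lt_of_ne fun h => (below R hR).ne (congrArg f h).symm⟩
  exact ⟨c, hcI, (hmax.isLocalMax (Icc_mem_nhds hcI.1 hcI.2)).hasDerivAt_eq_zero (hf c)⟩

theorem exists_hasDerivAt_eq_zero_Ioi (hf : ∀ x, HasDerivAt f (f' x) x) {s z : ℝ} (hsz : s < z)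
    (hs : f s = l) (hz : f z ≠ l) (hlim : Tendsto f atTop (𝓝 l)) : ∃ c, s < c ∧ f' c = 0 := by
  obtain ⟨R, hR⟩ := eventually_atTop.mp <|
    (hlim.eventually (Metric.ball_mem_nhds l (dist_pos.2 hz))).and (eventually_gt_atTop z)
  obtain ⟨c, hc, hc0⟩ := exists_hasDerivAt_eq_zero_of_dist_lt hf hsz (hR R le_rfl).2
    (by simpa [hs] using hz) (hR R le_rfl).1
  exact ⟨c, hc.1, hc0⟩

theorem exists_hasDerivAt_eq_zero_Iio (hf : ∀ x, HasDerivAt f (f' x) x) {s z : ℝ} (hzs : z < s)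
    (hs : f s = l) (hz : f z ≠ l) (hlim : Tendsto f atBot (𝓝 l)) : ∃ c, c < s ∧ f' c = 0 := by
  obtain ⟨L, hL⟩ := eventually_atBot.mp <|
    (hlim.eventually (Metric.ball_mem_nhds l (dist_pos.2 hz))).and (eventually_lt_atBot z)
  obtain ⟨c, hc, hc0⟩ := exists_hasDerivAt_eq_zero_of_dist_lt hf (hL L le_rfl).2 hzs
    (hL L le_rfl).1 (by simpa [hs] using hz)
  exact ⟨c, hc.2, hc0⟩

theorem exists_hasDerivAt_eq_zero_of_tendsto_atBot_atTop (hf : ∀ x, HasDerivAt f (f' x) x)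
    {z : ℝ} (hz : f z ≠ l) (hbot : Tendsto f atBot (𝓝 l)) (htop : Tendsto f atTop (𝓝 l)) :
    ∃ c, f' c = 0 := by
  have hball := Metric.ball_mem_nhds l (dist_pos.2 hz)
  obtain ⟨L, hL⟩ := eventually_atBot.mp <| (hbot.eventually hball).and (eventually_lt_atBot z)
  obtain ⟨R, hR⟩ := eventually_atTop.mp <| (htop.eventually hball).and (eventually_gt_atTop z)
  obtain ⟨c, -, hc0⟩ := exists_hasDerivAt_eq_zero_of_dist_lt hf (hL L le_rfl).2 (hR R le_rfl).2
    (hL L le_rfl).1 (hR R le_rfl).1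
  exact ⟨c, hc0⟩

end Rolle

namespace Polynomial

section GaussDeriv

variable {a b : ℝ} {p : ℝ[X]}

noncomputable def gaussDeriv (a b : ℝ) (p : ℝ[X]) : ℝ[X] :=
  -(C a) * X * p + C b * p + derivative p

noncomputable def evalMulGauss (a b : ℝ) (p : ℝ[X]) (y : ℝ) : ℝ :=
  eval y p * Real.exp (b * y - a / 2 * y ^ 2)

theorem hasDerivAt_evalMulGauss (a b : ℝ) (p : ℝ[X]) (x : ℝ) :
    HasDerivAt (evalMulGauss a b p) (evalMulGauss a b (gaussDeriv a b p) x) x := by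
  have hexp : HasDerivAt (fun y => b * y - a / 2 * y ^ 2) (b - a * x) x :=
    (((hasDerivAt_id x).const_mul b).sub ((hasDerivAt_pow 2 x).const_mul (a / 2))).congr_deriv
      (by norm_num; ring)
  refine ((p.hasDerivAt x).mul hexp.exp).congr_deriv ?_
  simp only [evalMulGauss, gaussDeriv, eval_add, eval_mul, eval_neg, eval_C, eval_X]
  ring

theorem evalMulGauss_eq_zero_iff {y : ℝ} : evalMulGauss a b p y = 0 ↔ p.IsRoot y := by
  simp [evalMulGauss, Real.exp_ne_zero]

theorem tendsto_evalMulGauss_atTop (ha : 0 < a) (b : ℝ) (p : ℝ[X]) :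
    Tendsto (evalMulGauss a b p) atTop (𝓝 0) := by
  have hlin : Tendsto (fun y => b + 1 + -(a / 2) * y) atTop atBot :=
    tendsto_atBot_add_const_left _ _ (tendsto_id.const_mul_atTop_of_neg (by linarith))
  have hquad : Tendsto (fun y => y * (b + 1 + -(a / 2) * y)) atTop atBot :=
    tendsto_id.atTop_mul_atBot₀ hlin
  have := (p.tendsto_div_exp_atTop).mul (Real.tendsto_exp_atBot.comp hquad)
  rw [zero_mul] at this
  refine this.congr fun y => ?_
  rw [Function.comp_apply, div_mul_eq_mul_div, mul_div_assoc, ← Real.exp_sub, evalMulGauss]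
  ring_nf

theorem tendsto_evalMulGauss_atBot (ha : 0 < a) (b : ℝ) (p : ℝ[X]) :
    Tendsto (evalMulGauss a b p) atBot (𝓝 0) := by
  refine ((tendsto_evalMulGauss_atTop ha (-b) (p.comp (-X))).comp tendsto_neg_atBot_atTop).congr
    fun y => ?_
  simp [evalMulGauss]

theorem exists_gt_not_isRoot (hp : p ≠ 0) (r : ℝ) : ∃ z, r < z ∧ ¬p.IsRoot z :=
  ((Ioi_infinite r).sdiff (finite_setOfPred_isRoot hp)).nonempty

theorem exists_lt_not_isRoot (hp : p ≠ 0) (r : ℝ) : ∃ z, z < r ∧ ¬p.IsRoot z :=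
  ((Iio_infinite r).sdiff (finite_setOfPred_isRoot hp)).nonempty

theorem exists_isRoot_gaussDeriv_gt (ha : 0 < a) (hp : p ≠ 0) {r : ℝ} (hr : p.IsRoot r) :
    ∃ w, r < w ∧ (gaussDeriv a b p).IsRoot w := by
  obtain ⟨z, hrz, hz⟩ := exists_gt_not_isRoot hp r
  obtain ⟨w, hrw, hw⟩ := exists_hasDerivAt_eq_zero_Ioi (hasDerivAt_evalMulGauss a b p) hrz
    (evalMulGauss_eq_zero_iff.2 hr) (mt evalMulGauss_eq_zero_iff.1 hz)
    (tendsto_evalMulGauss_atTop ha b p)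
  exact ⟨w, hrw, evalMulGauss_eq_zero_iff.1 hw⟩

theorem exists_isRoot_gaussDeriv_lt (ha : 0 < a) (hp : p ≠ 0) {r : ℝ} (hr : p.IsRoot r) :
    ∃ w, w < r ∧ (gaussDeriv a b p).IsRoot w := by
  obtain ⟨z, hzr, hz⟩ := exists_lt_not_isRoot hp r
  obtain ⟨w, hwr, hw⟩ := exists_hasDerivAt_eq_zero_Iio (hasDerivAt_evalMulGauss a b p) hzr
    (evalMulGauss_eq_zero_iff.2 hr) (mt evalMulGauss_eq_zero_iff.1 hz)
    (tendsto_evalMulGauss_atBot ha b p)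
  exact ⟨w, hwr, evalMulGauss_eq_zero_iff.1 hw⟩

theorem exists_isRoot_gaussDeriv (ha : 0 < a) (hp : p ≠ 0) :
    ∃ w, (gaussDeriv a b p).IsRoot w := by
  obtain ⟨z, -, hz⟩ := exists_gt_not_isRoot hp 0
  obtain ⟨w, hw⟩ := exists_hasDerivAt_eq_zero_of_tendsto_atBot_atTop
    (hasDerivAt_evalMulGauss a b p) (mt evalMulGauss_eq_zero_iff.1 hz)
    (tendsto_evalMulGauss_atBot ha b p) (tendsto_evalMulGauss_atTop ha b p)
  exact ⟨w, evalMulGauss_eq_zero_iff.1 hw⟩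

theorem exists_isRoot_gaussDeriv_mem_Ioo {r s : ℝ} (hrs : r < s) (hr : p.IsRoot r)
    (hs : p.IsRoot s) : ∃ w ∈ Ioo r s, (gaussDeriv a b p).IsRoot w := by
  obtain ⟨w, hw, hw0⟩ := exists_hasDerivAt_eq_zero hrs
    (fun y _ => (hasDerivAt_evalMulGauss a b p y).continuousAt.continuousWithinAt)
    ((evalMulGauss_eq_zero_iff.2 hr).trans (evalMulGauss_eq_zero_iff.2 hs).symm)
    (fun y _ => hasDerivAt_evalMulGauss a b p y)
  exact ⟨w, hw, evalMulGauss_eq_zero_iff.1 hw0⟩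

theorem natDegree_gaussDeriv (ha : a ≠ 0) (hp : p ≠ 0) :
    (gaussDeriv a b p).natDegree = p.natDegree + 1 := by
  have hlead : (-(C a) * X * p).natDegree = p.natDegree + 1 := by
    rw [natDegree_mul (by simpa using ha) hp, natDegree_mul (by simpa using ha) X_ne_zero]
    simp [add_comm]
  have hrest : (C b * p + derivative p).natDegree < p.natDegree + 1 :=
    Nat.lt_succ_of_le <| natDegree_add_le_of_degree_le (natDegree_C_mul_le b p)
      (natDegree_derivative_le p |>.trans (Nat.sub_le _ _))
  rw [gaussDeriv, add_assoc, natDegree_add_eq_left_of_natDegree_lt (hlead ▸ hrest), hlead]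

theorem gaussDeriv_ne_zero (ha : a ≠ 0) (hp : p ≠ 0) : gaussDeriv a b p ≠ 0 := fun h => by
  simpa [h] using natDegree_gaussDeriv (b := b) ha hp

theorem rootMultiplicity_sub_one_le_rootMultiplicity_gaussDeriv (hq : gaussDeriv a b p ≠ 0)
    (r : ℝ) : p.rootMultiplicity r - 1 ≤ (gaussDeriv a b p).rootMultiplicity r := by
  have hp : (X - C r) ^ (p.rootMultiplicity r - 1) ∣ p :=
    (pow_dvd_pow _ (Nat.sub_le _ _)).trans (p.pow_rootMultiplicity_dvd r)
  have hp' : (X - C r) ^ (p.rootMultiplicity r - 1) ∣ derivative p := by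
    rcases eq_or_ne (derivative p) 0 with h | h
    · exact h ▸ dvd_zero _
    · exact (le_rootMultiplicity_iff h).1
        (p.rootMultiplicity_sub_one_le_derivative_rootMultiplicity r)
  exact (le_rootMultiplicity_iff hq).2 (dvd_add (dvd_add (hp.mul_left _) (hp.mul_left _)) hp')

theorem card_roots_toFinset_add_one_le (ha : 0 < a) (hp : p ≠ 0) :
    p.roots.toFinset.card + 1 ≤
      ((gaussDeriv a b p).roots.toFinset \ p.roots.toFinset).card := by
  have hq := gaussDeriv_ne_zero (b := b) ha.ne' hp
  set s := p.roots.toFinset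
  set t := (gaussDeriv a b p).roots.toFinset
  have mem_s {r : ℝ} : r ∈ s ↔ p.IsRoot r := by simp [s, mem_roots hp]
  have mem_t {r : ℝ} : r ∈ t ↔ (gaussDeriv a b p).IsRoot r := by simp [t, mem_roots hq]
  rcases s.eq_empty_or_nonempty with hs | hs
  · obtain ⟨w, hw⟩ := exists_isRoot_gaussDeriv (b := b) ha hp
    rw [hs, Finset.card_empty, Finset.sdiff_empty, zero_add, Nat.one_le_iff_ne_zero,
      Finset.card_ne_zero]
    exact ⟨w, mem_t.2 hw⟩
  -- `s.card - 1` Rolle roots between consecutive roots of `p`, and one beyond each extreme root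
  set inner := t.filter (· ∈ Ioo (s.min' hs) (s.max' hs))
  have hinner : s.card ≤ (inner \ s).card + 1 := by
    refine Finset.card_le_sdiff_of_interleaved fun x hx y hy hxy _ => ?_
    obtain ⟨w, hw, hw0⟩ := exists_isRoot_gaussDeriv_mem_Ioo (b := b) hxy (mem_s.1 hx) (mem_s.1 hy)
    exact ⟨w, Finset.mem_filter.2 ⟨mem_t.2 hw0, (s.min'_le x hx).trans_lt hw.1,
      hw.2.trans_le (s.le_max' y hy)⟩, hw.1, hw.2⟩
  obtain ⟨u, hu, hu0⟩ := exists_isRoot_gaussDeriv_gt (b := b) ha hp (mem_s.1 (s.max'_mem hs))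
  obtain ⟨l, hl, hl0⟩ := exists_isRoot_gaussDeriv_lt (b := b) ha hp (mem_s.1 (s.min'_mem hs))
  have hminmax := s.min'_le _ (s.max'_mem hs)
  have hu_notMem : u ∉ insert l (inner \ s) := by
    simp only [Finset.mem_insert, Finset.mem_sdiff, Finset.mem_filter, mem_Ioo, inner]
    rintro (h | ⟨⟨-, -, h⟩, -⟩) <;> linarith
  have hl_notMem : l ∉ inner \ s := by
    simp only [Finset.mem_sdiff, Finset.mem_filter, mem_Ioo, inner]
    rintro ⟨⟨-, h, -⟩, -⟩; linarith
  have hsub : insert u (insert l (inner \ s)) ⊆ t \ s := by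
    refine Finset.insert_subset (Finset.mem_sdiff.2 ⟨mem_t.2 hu0, fun h => ?_⟩) <|
      Finset.insert_subset (Finset.mem_sdiff.2 ⟨mem_t.2 hl0, fun h => ?_⟩) <|
      Finset.sdiff_subset_sdiff (Finset.filter_subset _ _) le_rfl
    · exact (s.le_max' u h).not_gt hu
    · exact (s.min'_le l h).not_gt hl
  have := Finset.card_le_card hsub
  rw [Finset.card_insert_of_notMem hu_notMem, Finset.card_insert_of_notMem hl_notMem] at this
  omega

theorem card_roots_add_one_le_card_roots_gaussDeriv (ha : 0 < a) (hp : p ≠ 0) :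
    Multiset.card p.roots + 1 ≤ Multiset.card (gaussDeriv a b p).roots := by
  have hq := gaussDeriv_ne_zero (b := b) ha.ne' hp
  set q := gaussDeriv a b p
  calc Multiset.card p.roots + 1
      = ∑ x ∈ p.roots.toFinset, (p.roots.count x - 1 + 1) + 1 := by
        rw [← Multiset.toFinset_sum_count_eq]
        congr 1
        refine Finset.sum_congr rfl fun x hx => (tsub_add_cancel_of_le ?_).symm
        exact Nat.succ_le_iff.2 (Multiset.count_pos.2 (Multiset.mem_toFinset.1 hx))
    _ = ∑ x ∈ p.roots.toFinset, (p.rootMultiplicity x - 1) + (p.roots.toFinset.card + 1) := by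
        simp only [Finset.sum_add_distrib, Finset.card_eq_sum_ones, count_roots, add_assoc]
    _ ≤ ∑ x ∈ p.roots.toFinset, q.rootMultiplicity x +
          (q.roots.toFinset \ p.roots.toFinset).card :=
        add_le_add (Finset.sum_le_sum fun x _ =>
          rootMultiplicity_sub_one_le_rootMultiplicity_gaussDeriv hq x)
          (card_roots_toFinset_add_one_le ha hp)
    _ ≤ ∑ x ∈ p.roots.toFinset, q.roots.count x +
          ∑ x ∈ q.roots.toFinset \ p.roots.toFinset, q.roots.count x := by
        simp only [← count_roots, Finset.card_eq_sum_ones]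
        gcongr with x hx
        rw [Nat.succ_le_iff, Multiset.count_pos, ← Multiset.mem_toFinset]
        exact (Finset.mem_sdiff.1 hx).1
    _ = Multiset.card q.roots := by
      rw [← Finset.sum_union Finset.disjoint_sdiff, Finset.union_sdiff_self_eq_union,
        ← Multiset.toFinset_sum_count_eq, ← Finset.sum_subset Finset.subset_union_right]
      intro x _ hx
      simpa only [Multiset.mem_toFinset, Multiset.count_eq_zero] using hx

theorem Splits.gaussDeriv (hp : p.Splits) (ha : 0 < a) (hp0 : p ≠ 0) :
    (gaussDeriv a b p).Splits := by
  refine splits_iff_card_roots.2 (le_antisymm (card_roots' _) ?_)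
  rw [natDegree_gaussDeriv ha.ne' hp0, ← splits_iff_card_roots.1 hp]
  exact card_roots_add_one_le_card_roots_gaussDeriv ha hp0

theorem gaussDeriv_C_mul (c : ℝ) :
    gaussDeriv a b (C c * p) = C c * gaussDeriv a b p := by
  simp only [gaussDeriv, derivative_C_mul]; ring

theorem gaussDeriv_sq_sub_gaussDeriv_gaussDeriv_mul :
    gaussDeriv a b p ^ 2 - gaussDeriv a b (gaussDeriv a b p) * p =
      derivative p ^ 2 - p * derivative (derivative p) + C a * p ^ 2 := by
  simp only [gaussDeriv, derivative_add, derivative_mul, derivative_neg, derivative_C,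
    derivative_X]
  ring

end GaussDeriv

section Field

variable {K : Type*} [Field K]

theorem eval_derivative_sq_sub_mul_multiset_prod_X_sub_C {s : Multiset K} {x : K}
    (hx : ∀ z ∈ s, x ≠ z) :
    eval x (derivative (s.map (X - C ·)).prod) ^ 2 - eval x (s.map (X - C ·)).prod *
        eval x (derivative (derivative (s.map (X - C ·)).prod)) =
      eval x (s.map (X - C ·)).prod ^ 2 * (s.map fun z => 1 / (x - z) ^ 2).sum := by
  induction s using Multiset.induction_on with
  | empty => simp
  | cons z s ih =>
    have hz : x - z ≠ 0 := sub_ne_zero.2 (hx z (Multiset.mem_cons_self z s))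
    have ih := ih fun w hw => hx w (Multiset.mem_cons_of_mem hw)
    have hz' : (x - z) ^ 2 * (1 / (x - z) ^ 2) = 1 := by field_simp
    simp only [Multiset.map_cons, Multiset.prod_cons, Multiset.sum_cons, derivative_mul,
      derivative_add, derivative_sub, derivative_X, derivative_C, sub_zero, one_mul, eval_add,
      eval_mul, eval_sub, eval_X, eval_C]
    linear_combination (x - z) ^ 2 * ih - eval x (s.map (X - C ·)).prod ^ 2 * hz'

theorem Splits.eval_derivative_sq_sub_mul {f : K[X]} (hf : f.Splits) {x : K}
    (hx : f.eval x ≠ 0) :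
    eval x (derivative f) ^ 2 - eval x f * eval x (derivative (derivative f)) =
      eval x f ^ 2 * (f.roots.map fun z => 1 / (x - z) ^ 2).sum := by
  have hroots : ∀ z ∈ f.roots, x ≠ z := fun z hz h =>
    hx (h ▸ isRoot_of_mem_roots hz)
  have key := eval_derivative_sq_sub_mul_multiset_prod_X_sub_C hroots
  have h := hf.eq_prod_roots
  set g := (f.roots.map (X - C ·)).prod
  have e0 : eval x f = f.leadingCoeff * eval x g := by rw [← eval_C_mul, ← h]
  have e1 : eval x (derivative f) = f.leadingCoeff * eval x (derivative g) := by
    rw [← eval_C_mul, ← derivative_C_mul, ← h]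
  have e2 : eval x (derivative (derivative f)) =
      f.leadingCoeff * eval x (derivative (derivative g)) := by
    rw [← eval_C_mul, ← derivative_C_mul, ← derivative_C_mul, ← h]
  rw [e0, e1, e2]
  linear_combination f.leadingCoeff ^ 2 * key

end Field

theorem Splits.aeval_ne_zero {p : ℝ[X]} (hp : p.Splits) (hp0 : p ≠ 0) {x : ℂ}
    (hx : ∀ r ∈ p.roots, (r : ℂ) ≠ x) : aeval x p ≠ 0 := fun h => by
  have hmem : x ∈ (p.map (algebraMap ℝ ℂ)).roots :=
    (mem_roots (map_ne_zero hp0)).2 (by rwa [IsRoot, eval_map_algebraMap])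
  rw [hp.roots_map, Multiset.mem_map] at hmem
  obtain ⟨r, hr, rfl⟩ := hmem
  exact hx r hr rfl

theorem Splits.aeval_derivative_sq_sub_mul_add {p : ℝ[X]} (hp : p.Splits) {x : ℂ}
    (hx : aeval x p ≠ 0) (a : ℝ) :
    aeval x (derivative p ^ 2 - p * derivative (derivative p) + C a * p ^ 2) =
      aeval x p ^ 2 * ((p.roots.map fun r : ℝ => (1 / (x - r) ^ 2 : ℂ)).sum + a) := by
  have key := (hp.map (algebraMap ℝ ℂ)).eval_derivative_sq_sub_mul
    (x := x) (by rwa [eval_map_algebraMap])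
  simp only [derivative_map, eval_map_algebraMap, hp.roots_map, Multiset.map_map,
    Function.comp_def, Complex.coe_algebraMap] at key
  simp only [map_add, map_sub, map_mul, map_pow, aeval_C, Complex.coe_algebraMap]
  linear_combination key

theorem ne_zero_and_splits_of_eq_C_mul_gaussDeriv {P : ℕ → ℝ[X]} {a b c : ℝ} (ha : 0 < a)
    (hc : c ≠ 0) (h0 : P 0 ≠ 0 ∧ (P 0).Splits) (hrec : ∀ k, P (k + 1) = C c * gaussDeriv a b (P k))
    (k : ℕ) : P k ≠ 0 ∧ (P k).Splits := by
  induction k with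
  | zero => exact h0
  | succ k ih =>
    rw [hrec k]
    exact ⟨mul_ne_zero (C_ne_zero.2 hc) (gaussDeriv_ne_zero ha.ne' ih.1),
      (ih.2.gaussDeriv ha ih.1).C_mul c⟩

end Polynomial

theorem Complex.one_div_sq_im (w : ℂ) : (1 / w ^ 2).im = -2 * w.re * w.im / normSq w ^ 2 := by
  rw [one_div, ← inv_pow, pow_two, mul_im, inv_re, inv_im]; ring

theorem sum_one_div_sub_sq_add_ne_zero_of_forall_lt_re {R : Multiset ℝ} {x : ℂ} {a : ℝ}
    (ha : 0 < a) (hR : ∀ r ∈ R, r < x.re) :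
    (R.map fun r : ℝ => (1 / (x - r) ^ 2 : ℂ)).sum + a ≠ 0 := by
  -- `K` is closed under addition and contains every term, while `K + a` avoids `0`
  set K : ℂ → Prop := fun z => z.im * x.im < 0 ∨ (z.im = 0 ∧ 0 ≤ z.re)
  have hadd (z w : ℂ) (hz : K z) (hw : K w) : K (z + w) := by
    simp only [K, Complex.add_im, Complex.add_re, add_mul] at hz hw ⊢
    rcases hz with hz | ⟨hz, hz'⟩ <;> rcases hw with hw | ⟨hw, hw'⟩
    · exact Or.inl (by linarith)
    · exact Or.inl (by simp [hw, hz])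
    · exact Or.inl (by simp [hw, hz])
    · exact Or.inr ⟨by simp [hz, hw], by linarith⟩
  have hterm (r : ℝ) (hr : r < x.re) : K (1 / (x - r) ^ 2) := by
    rcases eq_or_ne x.im 0 with him | him
    · refine Or.inr ⟨by rw [Complex.one_div_sq_im]; simp [him], ?_⟩
      have hreal : x - r = ((x.re - r : ℝ) : ℂ) := Complex.ext (by simp) (by simp [him])
      rw [hreal, ← Complex.ofReal_pow, ← Complex.ofReal_one, ← Complex.ofReal_div,
        Complex.ofReal_re]
      positivity
    · left
      have hpos : 0 < Complex.normSq (x - r) := Complex.normSq_pos.2 fun h => by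
        simpa [sub_eq_zero.1 h] using hr.ne
      rw [Complex.one_div_sq_im]
      have : 0 < 2 * (x.re - r) * x.im ^ 2 / Complex.normSq (x - r) ^ 2 := by
        have := sub_pos.2 hr
        positivity
      simp only [Complex.sub_re, Complex.sub_im, Complex.ofReal_re, Complex.ofReal_im, sub_zero]
      linarith [show -2 * (x.re - r) * x.im / Complex.normSq (x - r) ^ 2 * x.im =
        -(2 * (x.re - r) * x.im ^ 2 / Complex.normSq (x - r) ^ 2) by ring]
  have hsum := Multiset.sum_induction K _ hadd (Or.inr ⟨rfl, le_rfl⟩) <|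
    Multiset.forall_mem_map_iff.2 fun r hr => hterm r (hR r hr)
  intro h
  rcases hsum with hsum | ⟨hsum, hsum'⟩
  · have := congrArg Complex.im h
    simp only [Complex.add_im, Complex.ofReal_im, add_zero, Complex.zero_im] at this
    rw [this, zero_mul] at hsum
    exact lt_irrefl 0 hsum
  · have := congrArg Complex.re h
    simp only [Complex.add_re, Complex.ofReal_re, Complex.zero_re] at this
    linarith

theorem sum_one_div_sub_sq_add_ne_zero_of_forall_re_lt {R : Multiset ℝ} {x : ℂ} {a : ℝ}
    (ha : 0 < a) (hR : ∀ r ∈ R, x.re < r) :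
    (R.map fun r : ℝ => (1 / (x - r) ^ 2 : ℂ)).sum + a ≠ 0 := by
  convert sum_one_div_sub_sq_add_ne_zero_of_forall_lt_re (R := R.map Neg.neg) (x := -x) ha
    (by simpa using fun r hr => neg_lt_neg (hR r hr)) using 2
  simp only [Multiset.map_map, Function.comp_def, Complex.ofReal_neg]
  exact congrArg Multiset.sum (Multiset.map_congr rfl fun r _ => by ring)

theorem stmt_9_general (P : ℕ → ℝ[X]) (a b c : ℝ) (ha : 0 < a) (hc : c ≠ 0)
    (hP0 : ∃ r : ℝ, r ≠ 0 ∧ P 0 = C r)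
    (hrec : ∀ k, P (k + 1) = C c * (-(C a) * X * P k + C b * P k + derivative (P k)))
    (M m : ℕ → ℝ)
    (hM : ∀ k, 1 ≤ k → eval (M k) (P k) = 0 ∧ ∀ r : ℝ, eval r (P k) = 0 → r ≤ M k)
    (hm : ∀ k, 1 ≤ k → eval (m k) (P k) = 0 ∧ ∀ r : ℝ, eval r (P k) = 0 → m k ≤ r) :
    ∀ k : ℕ, ∀ x : ℂ, (M (k + 1) < x.re ∨ x.re < m (k + 1)) →
      (aeval x (P (k + 1))) ^ 2 - aeval x (P (k + 2)) * aeval x (P k) ≠ 0 := by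
  have hrec' (k : ℕ) : P (k + 1) = C c * gaussDeriv a b (P k) := hrec k
  intro k x hx
  obtain ⟨hne, hsplit⟩ : P k ≠ 0 ∧ (P k).Splits := by
    obtain ⟨r, hr, h0⟩ := hP0
    exact ne_zero_and_splits_of_eq_C_mul_gaussDeriv ha hc (h0 ▸ ⟨C_ne_zero.2 hr, Splits.C r⟩)
      hrec' k
  have hroot {w : ℝ} (hw : (gaussDeriv a b (P k)).IsRoot w) : eval w (P (k + 1)) = 0 := by
    rw [hrec' k, eval_mul, hw.eq_zero, mul_zero]
  have hside : (∀ r ∈ (P k).roots, r < x.re) ∨ (∀ r ∈ (P k).roots, x.re < r) := by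
    refine hx.imp (fun hxM r hr => ?_) (fun hxm r hr => ?_)
    · obtain ⟨w, hrw, hw⟩ := exists_isRoot_gaussDeriv_gt (b := b) ha hne (isRoot_of_mem_roots hr)
      exact (hrw.trans_le ((hM _ k.succ_pos).2 w (hroot hw))).trans hxM
    · obtain ⟨w, hwr, hw⟩ := exists_isRoot_gaussDeriv_lt (b := b) ha hne (isRoot_of_mem_roots hr)
      exact hxm.trans (((hm _ k.succ_pos).2 w (hroot hw)).trans_lt hwr)
  have hx0 : aeval x (P k) ≠ 0 := hsplit.aeval_ne_zero hne fun r hr h => by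
    rcases hside with hs | hs <;> simpa [← h] using (hs r hr).ne
  have hturan : P (k + 1) ^ 2 - P (k + 2) * P k =
      C c ^ 2 * (derivative (P k) ^ 2 - P k * derivative (derivative (P k)) + C a * P k ^ 2) := by
    rw [hrec' (k + 1), hrec' k, gaussDeriv_C_mul, ← gaussDeriv_sq_sub_gaussDeriv_gaussDeriv_mul]
    ring
  rw [← map_pow, ← map_mul, ← map_sub, hturan, map_mul, hsplit.aeval_derivative_sq_sub_mul_add hx0]
  refine mul_ne_zero (by simpa using hc) (mul_ne_zero (pow_ne_zero 2 hx0) ?_)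
  rcases hside with hs | hs
  · exact sum_one_div_sub_sq_add_ne_zero_of_forall_lt_re ha hs
  · exact sum_one_div_sub_sq_add_ne_zero_of_forall_re_lt ha hs

theorem stmt_9 (P : ℕ → ℝ[X]) (a b c : ℝ) (ha : 0 < a) (hc : c ≠ 0)
    (hdeg : ∀ k, (P k).natDegree = k)
    (hP0 : ∃ r : ℝ, r ≠ 0 ∧ P 0 = C r)
    (hrec : ∀ k, P (k + 1) = C c * (-(C a) * X * P k + C b * P k + derivative (P k)))
    (M m : ℕ → ℝ)
    (hM : ∀ k, 1 ≤ k → eval (M k) (P k) = 0 ∧ ∀ r : ℝ, eval r (P k) = 0 → r ≤ M k)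
    (hm : ∀ k, 1 ≤ k → eval (m k) (P k) = 0 ∧ ∀ r : ℝ, eval r (P k) = 0 → m k ≤ r) :
    ∀ k : ℕ, ∀ x : ℂ, (M (k + 1) < x.re ∨ x.re < m (k + 1)) →
      (aeval x (P (k + 1))) ^ 2 - aeval x (P (k + 2)) * aeval x (P k) ≠ 0 :=
  stmt_9_general P a b c ha hc hP0 hrec M m hM hm
end

section
/- Let {P_k} be a sequence of real polynomials with P_k = P_{k+1}' for all k ≤ N−1, where each P_k (0 ≤ k ≤ N) has degree k and only real non-positive zeros. Then for every k with k+2 ≤ N, the Turán expression (P_{k+1}(x))² − P_{k+2}(x)·P_k(x) is weakly Hurwitz stable. -/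
/-!
Write `Q = P_{k+2}`, so that the Turán expression is `Q'² - Q Q''`. If `Q` splits with roots `zᵢ`,
then `Q'² - Q Q'' = Q² · ∑ 1 / (x - zᵢ)²`. For `Re x > 0` and real `zᵢ ≤ 0` the points `x - zᵢ`
lie on a horizontal half-line in the right half-plane, so the numbers `1 / (x - zᵢ)²` all lie in
one open half-plane through the origin and their sum cannot vanish; nor can `Q(x)`.
-/

open Polynomial

section Turan

variable {K : Type*} [Field K]

noncomputable def turan (f : K[X]) (x : K) : K :=
  f.derivative.eval x ^ 2 - f.eval x * f.derivative.derivative.eval x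

theorem turan_C_mul (a : K) (f : K[X]) (x : K) : turan (C a * f) x = a ^ 2 * turan f x := by
  simp only [turan, derivative_C_mul, eval_mul, eval_C]
  ring

theorem turan_X_sub_C_mul (r : K) (f : K[X]) (x : K) :
    turan ((X - C r) * f) x = f.eval x ^ 2 + (x - r) ^ 2 * turan f x := by
  simp only [turan, derivative_mul, derivative_sub, derivative_X, derivative_C, sub_zero, one_mul,
    derivative_add, eval_add, eval_mul, eval_sub, eval_X, eval_C]
  ring

theorem turan_prod_X_sub_C (s : Multiset K) {x : K} (hx : ∀ z ∈ s, x ≠ z) :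
    turan (s.map (X - C ·)).prod x =
      (s.map (X - C ·)).prod.eval x ^ 2 * (s.map fun z ↦ 1 / (x - z) ^ 2).sum := by
  induction s using Multiset.induction with
  | empty => simp [turan]
  | cons r s ih =>
    have hr : x - r ≠ 0 := sub_ne_zero.2 (hx r (Multiset.mem_cons_self r s))
    rw [Multiset.map_cons, Multiset.prod_cons, turan_X_sub_C_mul,
      ih fun z hz ↦ hx z (Multiset.mem_cons_of_mem hz)]
    simp only [Multiset.map_cons, Multiset.sum_cons, eval_mul, eval_sub, eval_X, eval_C]
    field_simp

theorem Polynomial.Splits.turan_eq {f : K[X]} (hf : f.Splits) {x : K} (hx : f.eval x ≠ 0) :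
    turan f x = f.eval x ^ 2 * (f.roots.map fun z ↦ 1 / (x - z) ^ 2).sum := by
  have hroots : ∀ z ∈ f.roots, x ≠ z := by
    rintro z hz rfl
    exact hx (isRoot_of_mem_roots hz)
  set p := (f.roots.map (X - C ·)).prod
  calc turan f x = turan (C f.leadingCoeff * p) x := by rw [← hf.eq_prod_roots]
    _ = (C f.leadingCoeff * p).eval x ^ 2 * (f.roots.map fun z ↦ 1 / (x - z) ^ 2).sum := by
      rw [turan_C_mul, turan_prod_X_sub_C _ hroots, eval_mul, eval_C]
      ring
    _ = _ := by rw [← hf.eq_prod_roots]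

end Turan

theorem Multiset.sum_ne_zero_of_re_mul_pos {s : Multiset ℂ} (hs : s ≠ 0) {u : ℂ}
    (h : ∀ z ∈ s, 0 < (u * z).re) : s.sum ≠ 0 := by
  intro h0
  have hpos : (s.map fun _ ↦ (0 : ℝ)).sum < (s.map fun z ↦ (u * z).re).sum :=
    Multiset.sum_lt_sum_of_nonempty hs h
  have hre : (s.map fun z ↦ (u * z).re).sum = (u * s.sum).re :=
    (map_multiset_sum (Complex.reAddGroupHom.comp (AddMonoidHom.mulLeft u)) s).symm
  rw [hre, h0, mul_zero, Complex.zero_re, Multiset.map_const', Multiset.sum_replicate,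
    smul_zero] at hpos
  exact hpos.false

theorem Complex.exists_forall_re_mul_one_div_sq_pos (b : ℝ) :
    ∃ u : ℂ, ∀ w : ℂ, 0 < w.re → w.im = b → 0 < (u * (1 / w ^ 2)).re := by
  have hre : ∀ u w : ℂ, (u * (1 / w ^ 2)).re =
      (u.re * (w.re ^ 2 - w.im ^ 2) + u.im * (2 * w.re * w.im)) / normSq w ^ 2 := by
    intro u w
    simp only [one_div, mul_re, inv_re, inv_im, pow_two, mul_im, normSq_mul]
    ring
  -- For `b ≠ 0` the numerator is `2 b² Re w` with `u = b i`; for `b = 0` the `1 / w²` are positive.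
  by_cases hb : b = 0
  · refine ⟨1, fun w hw him ↦ ?_⟩
    have : 0 < normSq w := normSq_pos.2 fun h ↦ by simp [h] at hw
    rw [hre, him, hb]
    simp only [one_re, one_im, zero_pow two_ne_zero, sub_zero, one_mul, mul_zero, add_zero]
    positivity
  · refine ⟨b * I, fun w hw him ↦ ?_⟩
    have : 0 < normSq w := normSq_pos.2 fun h ↦ by simp [h] at hw
    rw [hre, him]
    simp only [mul_re, mul_im, ofReal_re, ofReal_im, I_re, I_im, mul_zero, mul_one, sub_self,
      zero_mul, zero_add]
    have := sq_pos_of_ne_zero hb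
    exact div_pos (by nlinarith) (by positivity)

theorem turan_ne_zero_of_roots_nonpos {Q : ℂ[X]} (hQ : 0 < Q.natDegree)
    (hroots : ∀ z, Q.IsRoot z → ∃ r : ℝ, r ≤ 0 ∧ z = r) {x : ℂ} (hx : 0 < x.re) :
    turan Q x ≠ 0 := by
  have hQx : Q.eval x ≠ 0 := by
    intro h
    obtain ⟨r, hr, rfl⟩ := hroots x h
    simp only [Complex.ofReal_re] at hx
    linarith
  have hne : Q.roots ≠ 0 := by
    rw [Ne, IsAlgClosed.roots_eq_zero_iff_natDegree_eq_zero]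
    exact hQ.ne'
  obtain ⟨u, hu⟩ := Complex.exists_forall_re_mul_one_div_sq_pos x.im
  have hsum : (Q.roots.map fun z ↦ 1 / (x - z) ^ 2).sum ≠ 0 := by
    refine Multiset.sum_ne_zero_of_re_mul_pos (u := u) (Multiset.map_eq_zero.not.2 hne) ?_
    simp only [Multiset.mem_map]
    rintro _ ⟨z, hz, rfl⟩
    obtain ⟨r, hr, rfl⟩ := hroots z (isRoot_of_mem_roots hz)
    exact hu _ (by simp only [Complex.sub_re, Complex.ofReal_re]; linarith) (by simp)
  rw [(IsAlgClosed.splits Q).turan_eq hQx]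
  exact mul_ne_zero (pow_ne_zero 2 hQx) hsum

theorem stmt_19 (N : ℕ) (P : ℕ → ℝ[X])
    (hder : ∀ k, k + 1 ≤ N → P k = derivative (P (k + 1)))
    (hdeg : ∀ k, k ≤ N → (P k).natDegree = k)
    (hzeros : ∀ k, k ≤ N → ∀ z : ℂ, aeval z (P k) = 0 → ∃ r : ℝ, r ≤ 0 ∧ z = (r : ℂ)) :
    ∀ k : ℕ, k + 2 ≤ N → ∀ x : ℂ, 0 < x.re →
      (aeval x (P (k + 1))) ^ 2 - aeval x (P (k + 2)) * aeval x (P k) ≠ 0 := by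
  intro k hk x hx
  have h1 : P (k + 1) = derivative (P (k + 2)) := hder (k + 1) (by omega)
  have h0 : P k = derivative (derivative (P (k + 2))) := by rw [hder k (by omega), h1]
  have hQ : 0 < ((P (k + 2)).map (algebraMap ℝ ℂ)).natDegree := by
    rw [natDegree_map, hdeg (k + 2) hk]
    omega
  have hroots : ∀ z, ((P (k + 2)).map (algebraMap ℝ ℂ)).IsRoot z → ∃ r : ℝ, r ≤ 0 ∧ z = r :=
    fun z hz ↦ hzeros (k + 2) hk z (by rwa [IsRoot, eval_map_algebraMap] at hz)
  simpa only [turan, h0, h1, derivative_map, eval_map_algebraMap] using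
    turan_ne_zero_of_roots_nonpos hQ hroots hx
end
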